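/- arXiv:0712.1039 — 2 statements merged into one kernel-verified Lean document; each statement's English description precedes it below -/
import Mathlib

section
/- Let f₁,…,f_M and g̃₁,…,g̃_M be functions on a domain Ω ⊆ ℂ with the f_μ holomorphic, the g̃_ν smooth, and ∑_{μ=1}^M f_μ g̃_μ ≡ 1 on Ω. Suppose a_{μν} : Ω → ℂ are smooth functions satisfying ∂̄a_{μν} = g̃_μ ∂̄g̃_ν for all μ,ν. Then the functions G_μ := g̃_μ + ∑_{ν=1}^M (a_{μν} − a_{νμ}) f_ν are holomorphic on Ω and satisfy ∑_{μ=1}^M f_μ G_μ ≡ 1 on Ω. -/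
open Complex

noncomputable def dbar (h : ℂ → ℂ) (z : ℂ) : ℂ :=
  (fderiv ℝ h z 1 + Complex.I * fderiv ℝ h z Complex.I) / 2

lemma dbar_add {u v : ℂ → ℂ} {z : ℂ} (hu : DifferentiableAt ℝ u z)
    (hv : DifferentiableAt ℝ v z) :
    dbar (fun w => u w + v w) z = dbar u z + dbar v z := by
  simp only [dbar, fderiv_fun_add hu hv, ContinuousLinearMap.add_apply]
  ring

lemma dbar_sub {u v : ℂ → ℂ} {z : ℂ} (hu : DifferentiableAt ℝ u z)
    (hv : DifferentiableAt ℝ v z) :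
    dbar (fun w => u w - v w) z = dbar u z - dbar v z := by
  simp only [dbar, fderiv_fun_sub hu hv, ContinuousLinearMap.sub_apply]
  ring

lemma dbar_mul {u v : ℂ → ℂ} {z : ℂ} (hu : DifferentiableAt ℝ u z)
    (hv : DifferentiableAt ℝ v z) :
    dbar (fun w => u w * v w) z = dbar u z * v z + u z * dbar v z := by
  simp only [dbar, fderiv_fun_mul hu hv, ContinuousLinearMap.add_apply,
    ContinuousLinearMap.smul_apply, smul_eq_mul]
  ring

lemma dbar_sum {ι : Type*} (s : Finset ι) (u : ι → ℂ → ℂ) {z : ℂ}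
    (hu : ∀ i ∈ s, DifferentiableAt ℝ (u i) z) :
    dbar (fun w => ∑ i ∈ s, u i w) z = ∑ i ∈ s, dbar (u i) z := by
  simp only [dbar, fderiv_fun_sum hu, ContinuousLinearMap.sum_apply, Finset.mul_sum,
    ← Finset.sum_add_distrib, Finset.sum_div]

lemma dbar_eq_zero {h : ℂ → ℂ} {z : ℂ} (hh : DifferentiableAt ℂ h z) :
    dbar h z = 0 := by
  have h1 : fderiv ℝ h z = (fderiv ℂ h z).restrictScalars ℝ :=
    (hh.hasFDerivAt.restrictScalars ℝ).fderiv
  have h2 : fderiv ℂ h z Complex.I = Complex.I * fderiv ℂ h z 1 := by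
    have : fderiv ℂ h z (Complex.I • (1 : ℂ)) = Complex.I • fderiv ℂ h z 1 :=
      (fderiv ℂ h z).map_smul _ _
    simpa using this
  simp only [dbar, h1, ContinuousLinearMap.coe_restrictScalars', h2]
  linear_combination (fderiv ℂ h z 1) / 2 * Complex.I_mul_I

lemma holo_of_dbar {h : ℂ → ℂ} {z : ℂ} (hh : DifferentiableAt ℝ h z)
    (h0 : dbar h z = 0) : DifferentiableAt ℂ h z := by
  rw [differentiableAt_iff_restrictScalars ℝ hh]
  set L := fderiv ℝ h z with hL
  have heq : L 1 + Complex.I * L Complex.I = 0 := by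
    have : (L 1 + Complex.I * L Complex.I) / 2 = 0 := h0
    field_simp at this
    simpa using this
  have hI : L Complex.I = Complex.I * L 1 := by
    have hsq : Complex.I ^ 2 = -1 := Complex.I_sq
    linear_combination (-Complex.I) * heq + (L Complex.I) * hsq
  refine ⟨(L 1) • ContinuousLinearMap.id ℂ ℂ, ?_⟩
  apply ContinuousLinearMap.ext
  intro w
  simp only [ContinuousLinearMap.coe_restrictScalars', ContinuousLinearMap.smul_apply,
    ContinuousLinearMap.coe_id', id_eq, smul_eq_mul]
  have hw : w = (w.re : ℝ) • (1 : ℂ) + (w.im : ℝ) • Complex.I := by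
    simp [Complex.real_smul, Complex.re_add_im]
  have hLw : L w = (w.re : ℂ) * L 1 + (w.im : ℂ) * L Complex.I := by
    conv_lhs => rw [hw]
    rw [map_add, map_smul, map_smul]
    simp [Complex.real_smul]
  rw [hLw, hI]
  linear_combination (-(L 1)) * (Complex.re_add_im w)

theorem stmt0 (Ω : Set ℂ) (hΩ : IsOpen Ω) (M : ℕ)
    (f g : Fin M → ℂ → ℂ) (a : Fin M → Fin M → ℂ → ℂ)
    (hf : ∀ μ, DifferentiableOn ℂ (f μ) Ω)
    (hg : ∀ μ, ContDiffOn ℝ (⊤ : ℕ∞) (g μ) Ω)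
    (ha : ∀ μ ν, ContDiffOn ℝ (⊤ : ℕ∞) (a μ ν) Ω)
    (hsum : ∀ z ∈ Ω, ∑ μ, f μ z * g μ z = 1)
    (hdbar : ∀ μ ν, ∀ z ∈ Ω, dbar (a μ ν) z = g μ z * dbar (g ν) z) :
    (∀ μ, DifferentiableOn ℂ
        (fun z => g μ z + ∑ ν, (a μ ν z - a ν μ z) * f ν z) Ω) ∧
    (∀ z ∈ Ω, ∑ μ, f μ z * (g μ z + ∑ ν, (a μ ν z - a ν μ z) * f ν z) = 1) := by
  -- pointwise differentiability facts
  have hfz : ∀ μ, ∀ z ∈ Ω, DifferentiableAt ℂ (f μ) z := fun μ z hz =>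
    (hf μ).differentiableAt (hΩ.mem_nhds hz)
  have hfR : ∀ μ, ∀ z ∈ Ω, DifferentiableAt ℝ (f μ) z := fun μ z hz =>
    (hfz μ z hz).restrictScalars ℝ
  have hgR : ∀ μ, ∀ z ∈ Ω, DifferentiableAt ℝ (g μ) z := fun μ z hz =>
    ((hg μ).contDiffAt (hΩ.mem_nhds hz)).differentiableAt (by simp)
  have haR : ∀ μ ν, ∀ z ∈ Ω, DifferentiableAt ℝ (a μ ν) z := fun μ ν z hz =>
    ((ha μ ν).contDiffAt (hΩ.mem_nhds hz)).differentiableAt (by simp)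
  -- ∑ f ν z * dbar (g ν) z = 0
  have hzero : ∀ z ∈ Ω, ∑ ν, f ν z * dbar (g ν) z = 0 := by
    intro z hz
    have h1 : dbar (fun w => ∑ ν, f ν w * g ν w) z = 0 := by
      have heq : (fun w => ∑ ν, f ν w * g ν w) =ᶠ[nhds z] (fun _ => (1 : ℂ)) := by
        filter_upwards [hΩ.mem_nhds hz] with w hw using hsum w hw
      simp [dbar, heq.fderiv_eq]
    rw [dbar_sum _ (fun ν w => f ν w * g ν w) (fun ν _ => ((hfR ν z hz).mul (hgR ν z hz)))] at h1
    have h2 : ∀ ν ∈ Finset.univ, dbar (fun w => f ν w * g ν w) z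
        = f ν z * dbar (g ν) z := by
      intro ν _
      rw [dbar_mul (hfR ν z hz) (hgR ν z hz), dbar_eq_zero (hfz ν z hz)]
      ring
    rwa [Finset.sum_congr rfl h2] at h1
  -- differentiability over ℝ of each G μ at points of Ω
  have hGR : ∀ μ, ∀ z ∈ Ω,
      DifferentiableAt ℝ (fun w => g μ w + ∑ ν, (a μ ν w - a ν μ w) * f ν w) z := by
    intro μ z hz
    exact (hgR μ z hz).add (DifferentiableAt.fun_sum fun ν _ =>
      ((haR μ ν z hz).sub (haR ν μ z hz)).mul (hfR ν z hz))
  -- dbar of G μ vanishes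
  have hGdbar : ∀ μ, ∀ z ∈ Ω,
      dbar (fun w => g μ w + ∑ ν, (a μ ν w - a ν μ w) * f ν w) z = 0 := by
    intro μ z hz
    rw [dbar_add (hgR μ z hz) (DifferentiableAt.fun_sum (A := fun ν w => (a μ ν w - a ν μ w) * f ν w) fun ν _ =>
      ((haR μ ν z hz).sub (haR ν μ z hz)).mul (hfR ν z hz)),
      dbar_sum _ (fun ν w => (a μ ν w - a ν μ w) * f ν w) (fun ν _ => ((haR μ ν z hz).sub (haR ν μ z hz)).mul (hfR ν z hz))]
    have h2 : ∀ ν ∈ Finset.univ, dbar (fun w => (a μ ν w - a ν μ w) * f ν w) z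
        = (g μ z * dbar (g ν) z - g ν z * dbar (g μ) z) * f ν z := by
      intro ν _
      rw [dbar_mul (u := fun w => a μ ν w - a ν μ w) ((haR μ ν z hz).sub (haR ν μ z hz)) (hfR ν z hz),
        dbar_sub (haR μ ν z hz) (haR ν μ z hz), dbar_eq_zero (hfz ν z hz),
        hdbar μ ν z hz, hdbar ν μ z hz]
      ring
    rw [Finset.sum_congr rfl h2]
    have h3 : ∑ ν, (g μ z * dbar (g ν) z - g ν z * dbar (g μ) z) * f ν z
        = g μ z * (∑ ν, f ν z * dbar (g ν) z)
          - dbar (g μ) z * (∑ ν, f ν z * g ν z) := by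
      rw [Finset.mul_sum, Finset.mul_sum, ← Finset.sum_sub_distrib]
      exact Finset.sum_congr rfl fun ν _ => by ring
    rw [h3, hzero z hz, hsum z hz]
    ring
  constructor
  · intro μ z hz
    exact (holo_of_dbar (hGR μ z hz) (hGdbar μ z hz)).differentiableWithinAt
  · intro z hz
    have hanti : ∑ μ, ∑ ν, f μ z * ((a μ ν z - a ν μ z) * f ν z) = 0 := by
      have hc : ∑ μ, ∑ ν, f μ z * ((a μ ν z - a ν μ z) * f ν z)
          = ∑ ν, ∑ μ, f μ z * ((a μ ν z - a ν μ z) * f ν z) := by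
        rw [Finset.sum_comm]
      have hneg : ∑ ν : Fin M, ∑ μ : Fin M, f μ z * ((a μ ν z - a ν μ z) * f ν z)
          = -∑ μ : Fin M, ∑ ν : Fin M, f μ z * ((a μ ν z - a ν μ z) * f ν z) := by
        rw [← Finset.sum_neg_distrib]
        refine Finset.sum_congr rfl fun x _ => ?_
        rw [← Finset.sum_neg_distrib]
        exact Finset.sum_congr rfl fun y _ => by ring
      linear_combination (1 / 2 : ℂ) * (hc.trans hneg)
    calc ∑ μ, f μ z * (g μ z + ∑ ν, (a μ ν z - a ν μ z) * f ν z)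
        = ∑ μ, (f μ z * g μ z + ∑ ν, f μ z * ((a μ ν z - a ν μ z) * f ν z)) := by
          exact Finset.sum_congr rfl fun μ _ => by rw [mul_add, Finset.mul_sum]
      _ = (∑ μ, f μ z * g μ z) + ∑ μ, ∑ ν, f μ z * ((a μ ν z - a ν μ z) * f ν z) := by
          rw [Finset.sum_add_distrib]
      _ = 1 := by rw [hsum z hz, hanti, add_zero]
end

section
/- Define u(z) = ∫_{−π/2}^{π/2} min(0, log|e^{iπ/6} − e^{iθ}|) · P_z(θ) dθ/(2π) for z on the imaginary axis segment {iy : −1 < y < 1} in 𝔻. Then u(iy) ≥ −log 2 for all y ∈ (−1,1). -/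
/-!
Split `[-π/2, π/2]` at `-π/6`, `π/6`, `π/3` and write `d = |e^{iπ/6} - e^{iθ}|`. The key fact about
the kernel on the imaginary axis is `cos θ · P_{iy}(θ) ≤ 1`. For `θ ≤ -π/6` we have `d ≥ 1`, so the
integrand vanishes. Near `π/6`, concavity of `sin` gives `d ≥ (3/π)|θ - π/6|`, while `cos θ` is
bounded below, so the integrand is bounded below by an integrable multiple of a logarithm. On
`[π/3, π/2]`, where `P_{iy}` is unbounded, `log d ≥ (d - 1/d)/2` and `d² - 1 ≥ -√3 cos θ` produce a
factor `cos θ` that absorbs `P_{iy}`, leaving `-(√3/12)/(θ - π/6)`. The four pieces add up to at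
least `-√3/9 - (1 + log 2)/6 - (√3/12) log 2 ≈ -0.575 > -log 2`.
-/

open Complex MeasureTheory
open scoped Real

namespace Real

theorem div_mul_sin_le_sin {x a : ℝ} (hx : 0 ≤ x) (hxa : x ≤ a) (ha : a ≤ π) :
    x / a * sin a ≤ sin x := by
  rcases hx.eq_or_lt with rfl | hx
  · simp
  have ha0 : 0 < a := hx.trans_le hxa
  simpa [div_mul_cancel₀ x ha0.ne'] using
    strictConcaveOn_sin_Icc.concaveOn.2 ⟨le_rfl, pi_pos.le⟩ ⟨ha0.le, ha⟩
      (sub_nonneg.2 ((div_le_one ha0).2 hxa)) (div_nonneg hx.le ha0.le) (by ring)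

theorem sub_inv_div_two_le_log {x : ℝ} (hx0 : 0 < x) (hx1 : x ≤ 1) : (x - x⁻¹) / 2 ≤ log x := by
  rw [← sinh_log hx0]
  exact sinh_le_self_iff.2 (log_nonpos hx0.le hx1)

theorem abs_sin_half_eq {x : ℝ} (hx : |x| ≤ 2 * π) : |sin (x / 2)| = sin (|x| / 2) := by
  rw [abs_sin_eq_sin_abs_of_abs_le_pi (by rw [abs_div, abs_two]; linarith), abs_div, abs_two]

end Real

theorem norm_exp_mul_I_sub_exp_mul_I (a b : ℝ) :
    ‖exp (a * I) - exp (b * I)‖ = 2 * |Real.sin ((a - b) / 2)| := by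
  have h : exp (a * I) - exp (b * I) = exp (b * I) * (exp (I * ↑(a - b)) - 1) := by
    rw [mul_sub, ← Complex.exp_add]; push_cast; ring_nf
  rw [h, norm_mul, norm_exp_ofReal_mul_I, one_mul, norm_exp_I_mul_ofReal_sub_one, norm_mul,
    Real.norm_eq_abs, Real.norm_eq_abs, abs_two]

theorem norm_exp_mul_I_sub_exp_mul_I_sq (a b : ℝ) :
    ‖exp (a * I) - exp (b * I)‖ ^ 2 = 2 - 2 * Real.cos (a - b) := by
  rw [norm_exp_mul_I_sub_exp_mul_I, mul_pow, sq_abs, Real.sin_sq_eq_half_sub]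
  ring_nf

theorem one_le_norm_exp_mul_I_sub_exp_mul_I {a b : ℝ} (h₁ : π / 3 ≤ a - b) (h₂ : a - b ≤ π) :
    1 ≤ ‖exp (a * I) - exp (b * I)‖ := by
  have hsin : Real.sin (π / 6) ≤ Real.sin ((a - b) / 2) :=
    Real.sin_le_sin_of_le_of_le_pi_div_two (by linarith [Real.pi_pos]) (by linarith) (by linarith)
  rw [Real.sin_pi_div_six] at hsin
  rw [norm_exp_mul_I_sub_exp_mul_I]
  linarith [le_abs_self (Real.sin ((a - b) / 2))]

theorem mul_abs_le_norm_exp_mul_I_sub_exp_mul_I {a b : ℝ} (h : |a - b| ≤ π / 3) :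
    3 / π * |a - b| ≤ ‖exp (a * I) - exp (b * I)‖ := by
  have hsin := Real.div_mul_sin_le_sin (x := |a - b| / 2) (a := π / 6) (by positivity)
    (by linarith) (by linarith [Real.pi_pos])
  rw [Real.sin_pi_div_six] at hsin
  rw [norm_exp_mul_I_sub_exp_mul_I, Real.abs_sin_half_eq (by linarith [Real.pi_pos])]
  calc 3 / π * |a - b| = 2 * (|a - b| / 2 / (π / 6) * (1 / 2)) := by
        field_simp; ring
    _ ≤ 2 * Real.sin (|a - b| / 2) := by gcongr

theorem norm_exp_mul_I_sub_exp_mul_I_le_one {a b : ℝ} (h : |a - b| ≤ π / 3) :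
    ‖exp (a * I) - exp (b * I)‖ ≤ 1 := by
  have hsin : Real.sin (|a - b| / 2) ≤ Real.sin (π / 6) :=
    Real.sin_le_sin_of_le_of_le_pi_div_two (by linarith [abs_nonneg (a - b), Real.pi_pos])
      (by linarith [Real.pi_pos]) (by linarith)
  rw [norm_exp_mul_I_sub_exp_mul_I, Real.abs_sin_half_eq (by linarith [Real.pi_pos])]
  linarith [Real.sin_pi_div_six]

section LogIntegrals

open intervalIntegral

variable {a b c : ℝ}

theorem intervalIntegrable_log_mul_sub_left :
    IntervalIntegrable (fun θ => Real.log (c * (θ - a))) volume a b :=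
  (analyticOnNhd_const.mul (analyticOnNhd_id.sub analyticOnNhd_const)).meromorphicOn
    |>.intervalIntegrable_log

theorem intervalIntegrable_log_mul_sub_right :
    IntervalIntegrable (fun θ => Real.log (c * (b - θ))) volume a b :=
  (analyticOnNhd_const.mul (analyticOnNhd_const.sub analyticOnNhd_id)).meromorphicOn
    |>.intervalIntegrable_log

theorem integral_log_mul_sub_left (hc : c ≠ 0) :
    ∫ θ in a..b, Real.log (c * (θ - a)) = (b - a) * (Real.log (c * (b - a)) - 1) := by
  simp_rw [mul_sub c]
  rw [integral_comp_mul_sub (fun x => Real.log x) hc, integral_log]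
  simp only [sub_self, Real.log_zero, mul_zero, sub_zero, add_zero, smul_eq_mul]
  field_simp

theorem integral_log_mul_sub_right (hc : c ≠ 0) :
    ∫ θ in a..b, Real.log (c * (b - θ)) = (b - a) * (Real.log (c * (b - a)) - 1) := by
  simp_rw [mul_sub c]
  rw [integral_comp_sub_mul (fun x => Real.log x) hc, integral_log]
  simp only [sub_self, Real.log_zero, mul_zero, sub_zero, add_zero, smul_eq_mul]
  field_simp

end LogIntegrals

theorem poissonKernel_zero_exp_mul_I (w : ℂ) (θ : ℝ) :
    poissonKernel 0 w (exp (θ * I)) = (1 - ‖w‖ ^ 2) / ‖exp (θ * I) - w‖ ^ 2 := by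
  simp [poissonKernel_def, norm_exp_ofReal_mul_I]

theorem poissonKernel_zero_exp_mul_I_nonneg {w : ℂ} (hw : ‖w‖ ≤ 1) (θ : ℝ) :
    0 ≤ poissonKernel 0 w (exp (θ * I)) := by
  rw [poissonKernel_zero_exp_mul_I]
  exact div_nonneg (sub_nonneg.2 (pow_le_one₀ (norm_nonneg w) hw)) (sq_nonneg _)

theorem norm_exp_mul_I_sub_I_mul_sq (θ y : ℝ) :
    ‖exp (θ * I) - I * y‖ ^ 2 = 1 - 2 * y * Real.sin θ + y ^ 2 := by
  rw [exp_mul_I, ← normSq_eq_norm_sq, normSq_apply]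
  simp [cos_ofReal_re, sin_ofReal_re]
  nlinarith [Real.sin_sq_add_cos_sq θ]

theorem cos_mul_poissonKernel_zero_I_mul_le_one (y θ : ℝ) :
    Real.cos θ * poissonKernel 0 (I * y) (exp (θ * I)) ≤ 1 := by
  have hnum : ‖I * (y : ℂ)‖ ^ 2 = y ^ 2 := by simp
  rw [poissonKernel_zero_exp_mul_I, hnum, norm_exp_mul_I_sub_I_mul_sq, ← mul_div_assoc]
  apply div_le_one_of_le₀ _ (by nlinarith [sq_nonneg (y - Real.sin θ), Real.sin_sq_add_cos_sq θ])
  have hsc := Real.sin_sq_add_cos_sq θ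
  rcases (Real.neg_one_le_cos θ).eq_or_lt with hc | hc
  · have hs : Real.sin θ = 0 := pow_eq_zero_iff two_ne_zero |>.1 (by rw [← hc] at hsc; linarith)
    rw [hs, ← hc]
    nlinarith
  · -- `(1 + cos θ) (1 - 2 y sin θ + y² - (1 - y²) cos θ) = ((1 + cos θ) y - sin θ)²`
    nlinarith [sq_nonneg ((1 + Real.cos θ) * y - Real.sin θ)]

/-- Mathlib's `poissonKernel 0 w (exp (θ * I))` is the Poisson kernel `P_w(θ)` of the unit disc. -/
noncomputable def logNegPoissonIntegrand (y θ : ℝ) : ℝ :=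
  min 0 (Real.log ‖exp (π / 6 * I) - exp (θ * I)‖) * poissonKernel 0 (I * y) (exp (θ * I)) /
    (2 * π)

theorem logNegPoissonIntegrand_eq_zero {y θ : ℝ} (hθ₁ : -(5 * π / 6) ≤ θ) (hθ₂ : θ ≤ -(π / 6)) :
    logNegPoissonIntegrand y θ = 0 := by
  have hdist := one_le_norm_exp_mul_I_sub_exp_mul_I (a := π / 6) (b := θ) (by linarith)
    (by linarith)
  push_cast at hdist
  rw [logNegPoissonIntegrand, min_eq_left (Real.log_nonneg hdist), zero_mul, zero_div]

theorem log_div_le_logNegPoissonIntegrand {y θ c : ℝ} (hy : |y| ≤ 1) (hθ : |π / 6 - θ| ≤ π / 3)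
    (hc : 0 < c) (hcθ : c ≤ Real.cos θ) :
    Real.log (3 / π * |π / 6 - θ|) / (2 * π * c) ≤ logNegPoissonIntegrand y θ := by
  set P := poissonKernel 0 (I * y) (exp (θ * I))
  set L := Real.log (3 / π * |π / 6 - θ|)
  have hP : 0 ≤ P := poissonKernel_zero_exp_mul_I_nonneg (by simpa using hy) θ
  have hL : L ≤ 0 := Real.log_nonpos (by positivity) (by
    rw [div_mul_eq_mul_div, div_le_one Real.pi_pos]; linarith)
  have hLdist : L ≤ Real.log ‖exp (π / 6 * I) - exp (θ * I)‖ := by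
    have hdist := mul_abs_le_norm_exp_mul_I_sub_exp_mul_I (a := π / 6) (b := θ) hθ
    push_cast at hdist
    rcases (abs_nonneg (π / 6 - θ)).eq_or_lt with h0 | hpos
    · have hθ : θ = π / 6 := by linarith [abs_eq_zero.1 h0.symm]
      simp [L, hθ]
    · exact Real.log_le_log (by positivity) hdist
  have hPc : P ≤ c⁻¹ := by
    rw [← one_div, le_div_iff₀ hc]
    linarith [(mul_le_mul_of_nonneg_right hcθ hP).trans
      (cos_mul_poissonKernel_zero_I_mul_le_one y θ)]
  calc L / (2 * π * c) = L * c⁻¹ / (2 * π) := by field_simp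
    _ ≤ L * P / (2 * π) := by gcongr ?_ / _; exact mul_le_mul_of_nonpos_left hPc hL
    _ ≤ min 0 (Real.log ‖exp (π / 6 * I) - exp (θ * I)‖) * P / (2 * π) := by
      gcongr; exact le_min hL hLdist

theorem neg_div_le_logNegPoissonIntegrand {y θ : ℝ} (hy : |y| ≤ 1) (hθ₀ : 0 < |π / 6 - θ|)
    (hθ : |π / 6 - θ| ≤ π / 3) (hθπ : θ ≤ π / 2) :
    -(√3 / 12) / |π / 6 - θ| ≤ logNegPoissonIntegrand y θ := by
  set P := poissonKernel 0 (I * y) (exp (θ * I))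
  set d := ‖exp (π / 6 * I) - exp (θ * I)‖
  have hP : 0 ≤ P := poissonKernel_zero_exp_mul_I_nonneg (by simpa using hy) θ
  have hcosP := cos_mul_poissonKernel_zero_I_mul_le_one y θ
  have hcos : 0 ≤ Real.cos θ :=
    Real.cos_nonneg_of_mem_Icc ⟨by linarith [(abs_le.1 hθ).2, Real.pi_pos], hθπ⟩
  have hd_lb := mul_abs_le_norm_exp_mul_I_sub_exp_mul_I (a := π / 6) (b := θ) hθ
  have hd_le := norm_exp_mul_I_sub_exp_mul_I_le_one (a := π / 6) (b := θ) hθ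
  have hd_sq := norm_exp_mul_I_sub_exp_mul_I_sq (π / 6) θ
  push_cast at hd_lb hd_le hd_sq
  have hd : 0 < d := lt_of_lt_of_le (by positivity) hd_lb
  -- `d² - 1 = 1 - √3 cos θ - sin θ`
  have hgap : -(√3 * Real.cos θ) ≤ d ^ 2 - 1 := by
    rw [hd_sq, Real.cos_sub, Real.cos_pi_div_six, Real.sin_pi_div_six]
    linarith [Real.sin_le_one θ]
  have hlog : -(√3 * Real.cos θ) / (2 * d) ≤ min 0 (Real.log d) := by
    refine le_min (div_nonpos_of_nonpos_of_nonneg (by simp [hcos]) (by positivity)) ?_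
    calc -(√3 * Real.cos θ) / (2 * d) ≤ (d ^ 2 - 1) / (2 * d) := by gcongr
      _ = (d - d⁻¹) / 2 := by field_simp
      _ ≤ Real.log d := Real.sub_inv_div_two_le_log hd hd_le
  calc -(√3 / 12) / |π / 6 - θ| = -(√3 / (2 * (3 / π * |π / 6 - θ|))) / (2 * π) := by
        field_simp; ring
    _ ≤ -(√3 / (2 * d)) / (2 * π) := by gcongr
    _ ≤ -(√3 * Real.cos θ) / (2 * d) * P / (2 * π) := by
      gcongr ?_ / _
      rw [div_mul_eq_mul_div, neg_mul, mul_assoc, neg_div, neg_le_neg_iff]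
      gcongr
      exact mul_le_of_le_one_right (Real.sqrt_nonneg 3) hcosP
    _ ≤ min 0 (Real.log d) * P / (2 * π) := by gcongr

section Pieces

open intervalIntegral

variable {y : ℝ}

theorem integral_logNegPoissonIntegrand_left_nonneg :
    0 ≤ ∫ θ in -(π / 2)..-(π / 6), logNegPoissonIntegrand y θ :=
  integral_nonneg (by linarith [Real.pi_pos]) fun _ hθ ↦
    (logNegPoissonIntegrand_eq_zero (by linarith [hθ.1, Real.pi_pos]) hθ.2).ge

theorem le_integral_logNegPoissonIntegrand_center (hy : |y| ≤ 1)
    (hF : IntervalIntegrable (logNegPoissonIntegrand y) volume (-(π / 6)) (π / 6)) :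
    -(√3 / 9) ≤ ∫ θ in -(π / 6)..π / 6, logNegPoissonIntegrand y θ := by
  have hπ := Real.pi_pos
  have hlow : ∀ θ ∈ Set.Icc (-(π / 6)) (π / 6),
      Real.log (3 / π * (π / 6 - θ)) / (2 * π * (√3 / 2)) ≤ logNegPoissonIntegrand y θ := by
    rintro θ ⟨hθ₁, hθ₂⟩
    have habs : |π / 6 - θ| = π / 6 - θ := abs_of_nonneg (by linarith)
    have hcos : √3 / 2 ≤ Real.cos θ := by
      rw [← Real.cos_pi_div_six, ← Real.cos_abs θ]
      exact Real.cos_le_cos_of_nonneg_of_le_pi (abs_nonneg θ) (by linarith) (abs_le.2 ⟨hθ₁, hθ₂⟩)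
    simpa [habs] using log_div_le_logNegPoissonIntegrand hy (by rw [habs]; linarith)
      (by positivity) hcos
  calc -(√3 / 9) = (∫ θ in -(π / 6)..π / 6, Real.log (3 / π * (π / 6 - θ))) /
        (2 * π * (√3 / 2)) := by
        rw [integral_log_mul_sub_right (by positivity),
          show 3 / π * (π / 6 - -(π / 6)) = 1 by field_simp; ring, Real.log_one]
        field_simp
        rw [Real.sq_sqrt zero_le_three]
        ring
    _ ≤ _ := by
      rw [← intervalIntegral.integral_div]
      exact integral_mono_on (by linarith) (intervalIntegrable_log_mul_sub_right.div_const _) hF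
        hlow

theorem le_integral_logNegPoissonIntegrand_right (hy : |y| ≤ 1)
    (hF : IntervalIntegrable (logNegPoissonIntegrand y) volume (π / 6) (π / 3)) :
    -((1 + Real.log 2) / 6) ≤ ∫ θ in π / 6..π / 3, logNegPoissonIntegrand y θ := by
  have hπ := Real.pi_pos
  have hlow : ∀ θ ∈ Set.Icc (π / 6) (π / 3),
      Real.log (3 / π * (θ - π / 6)) / (2 * π * (1 / 2)) ≤ logNegPoissonIntegrand y θ := by
    rintro θ ⟨hθ₁, hθ₂⟩
    have habs : |π / 6 - θ| = θ - π / 6 := by rw [abs_sub_comm]; exact abs_of_nonneg (by linarith)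
    have hcos : 1 / 2 ≤ Real.cos θ := by
      rw [← Real.cos_pi_div_three]
      exact Real.cos_le_cos_of_nonneg_of_le_pi (by linarith) (by linarith) hθ₂
    simpa [habs] using log_div_le_logNegPoissonIntegrand hy (by rw [habs]; linarith)
      one_half_pos hcos
  calc -((1 + Real.log 2) / 6) = (∫ θ in π / 6..π / 3, Real.log (3 / π * (θ - π / 6))) /
        (2 * π * (1 / 2)) := by
        rw [integral_log_mul_sub_left (by positivity),
          show 3 / π * (π / 3 - π / 6) = 2⁻¹ by field_simp; ring, Real.log_inv]
        field_simp
        ring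
    _ ≤ _ := by
      rw [← intervalIntegral.integral_div]
      exact integral_mono_on (by linarith) (intervalIntegrable_log_mul_sub_left.div_const _) hF
        hlow

theorem le_integral_logNegPoissonIntegrand_tail (hy : |y| ≤ 1)
    (hF : IntervalIntegrable (logNegPoissonIntegrand y) volume (π / 3) (π / 2)) :
    -(√3 / 12 * Real.log 2) ≤ ∫ θ in π / 3..π / 2, logNegPoissonIntegrand y θ := by
  have hπ := Real.pi_pos
  have hlow : ∀ θ ∈ Set.Icc (π / 3) (π / 2),
      -(√3 / 12) * (θ - π / 6)⁻¹ ≤ logNegPoissonIntegrand y θ := by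
    rintro θ ⟨hθ₁, hθ₂⟩
    have habs : |π / 6 - θ| = θ - π / 6 := by rw [abs_sub_comm]; exact abs_of_nonneg (by linarith)
    have h := neg_div_le_logNegPoissonIntegrand hy (by rw [habs]; linarith)
      (by rw [habs]; linarith) hθ₂
    rwa [habs, div_eq_mul_inv] at h
  have hint : IntervalIntegrable (fun θ ↦ (θ - π / 6)⁻¹) volume (π / 3) (π / 2) := by
    refine intervalIntegrable_inv (fun θ hθ ↦ ?_) (by fun_prop)
    rw [Set.uIcc_of_le (by linarith)] at hθ
    linarith [hθ.1]
  calc -(√3 / 12 * Real.log 2) = ∫ θ in π / 3..π / 2, -(√3 / 12) * (θ - π / 6)⁻¹ := by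
        rw [intervalIntegral.integral_const_mul, integral_comp_sub_right (fun θ ↦ θ⁻¹),
          integral_inv_of_pos (by linarith) (by linarith),
          show (π / 2 - π / 6) / (π / 3 - π / 6) = 2 by field_simp; ring]
        ring
    _ ≤ _ := integral_mono_on (by linarith) (hint.const_mul _) hF hlow

end Pieces

theorem neg_log_two_le_bound :
    -Real.log 2 ≤ -(√3 / 9) + -((1 + Real.log 2) / 6) + -(√3 / 12 * Real.log 2) := by
  have hsqrt : √3 ≤ 7 / 4 := Real.sqrt_le_iff.2 ⟨by norm_num, by norm_num⟩
  have hlog := Real.log_two_gt_d9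
  nlinarith [mul_le_mul_of_nonneg_right hsqrt (Real.log_nonneg one_le_two)]

theorem stmt6 :
    ∀ y : ℝ, y ∈ Set.Ioo (-1 : ℝ) 1 →
      -Real.log 2 ≤
        ∫ θ in Set.Icc (-(Real.pi / 2)) (Real.pi / 2),
          min 0 (Real.log ‖Complex.exp (Real.pi / 6 * Complex.I) - Complex.exp (θ * Complex.I)‖) *
            ((1 - ‖(Complex.I * (y : ℂ))‖ ^ 2) / ‖Complex.exp (θ * Complex.I) - Complex.I * (y : ℂ)‖ ^ 2)
            / (2 * Real.pi) := by
  intro y hy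
  simp_rw [← poissonKernel_zero_exp_mul_I]
  change -Real.log 2 ≤ ∫ θ in Set.Icc (-(π / 2)) (π / 2), logNegPoissonIntegrand y θ
  have hπ := Real.pi_pos
  by_cases hF : IntegrableOn (logNegPoissonIntegrand y) (Set.Icc (-(π / 2)) (π / 2))
  swap
  · rw [integral_undef hF]
    linarith [Real.log_pos one_lt_two]
  have hy' : |y| ≤ 1 := abs_le.2 ⟨hy.1.le, hy.2.le⟩
  have hpiece {a b : ℝ} (ha : -(π / 2) ≤ a) (hab : a ≤ b) (hb : b ≤ π / 2) :
      IntervalIntegrable (logNegPoissonIntegrand y) volume a b :=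
    (hF.mono_set (Set.uIcc_subset_Icc ⟨ha, hab.trans hb⟩ ⟨ha.trans hab, hb⟩)).intervalIntegrable
  have h₁ := integral_logNegPoissonIntegrand_left_nonneg (y := y)
  have h₂ := le_integral_logNegPoissonIntegrand_center hy'
    (hpiece (by linarith) (by linarith) (by linarith))
  have h₃ := le_integral_logNegPoissonIntegrand_right hy'
    (hpiece (by linarith) (by linarith) (by linarith))
  have h₄ := le_integral_logNegPoissonIntegrand_tail hy' (hpiece (by linarith) (by linarith) le_rfl)
  rw [integral_Icc_eq_integral_Ioc, ← intervalIntegral.integral_of_le (by linarith),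
    ← intervalIntegral.integral_add_adjacent_intervals (b := π / 3) (hpiece _ _ _) (hpiece _ _ _),
    ← intervalIntegral.integral_add_adjacent_intervals (b := π / 6) (hpiece _ _ _) (hpiece _ _ _),
    ← intervalIntegral.integral_add_adjacent_intervals (b := -(π / 6)) (hpiece _ _ _)
      (hpiece _ _ _)]
  · linarith [neg_log_two_le_bound]
  all_goals linarith
end
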